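/- Let G be a finite group, p a prime, and P a p-subgroup of G that is pronormal in G. Let H be a subgroup of G containing P. If H is a normal subgroup of the normalizer N_G(P) (in particular H ≤ N_G(P)), then H is pronormal in G. -/

import Mathlib

/-!
A witness `x` for the pronormality of `P` at `g` also works for `H`: `P^x = P^g` means that
`x g⁻¹` normalizes `P`, hence normalizes `H` because `H ⊴ N_G(P)`, i.e. `H^x = H^g`.
-/

/-- The conjugate `H^g := g⁻¹ H g` of a subgroup `H` by an element `g`. -/
def Subgroup.conjugate {G : Type*} [Group G] (H : Subgroup G) (g : G) : Subgroup G :=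
  H.map (MulAut.conj g⁻¹).toMonoidHom

/-- A subgroup `H` of a group `G` is pronormal in `G` if for every `g ∈ G` there exists
`x ∈ ⟨H, H^g⟩` such that `H^x = H^g`. -/
def IsPronormal {G : Type*} [Group G] (H : Subgroup G) : Prop :=
  ∀ g : G, ∃ x ∈ (H ⊔ H.conjugate g : Subgroup G), H.conjugate x = H.conjugate g

namespace Subgroup

variable {G : Type*} [Group G]

theorem conjugate_conjugate (H : Subgroup G) (a b : G) :
    (H.conjugate a).conjugate b = H.conjugate (a * b) := by
  rw [conjugate, conjugate, conjugate, map_map, mul_inv_rev, map_mul]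
  rfl

theorem conjugate_eq_self_iff {H : Subgroup G} {g : G} :
    H.conjugate g = H ↔ g ∈ normalizer (H : Set G) := by
  rw [← inv_mem_iff, mem_normalizer_iff_map_conj_eq]
  rfl

theorem conjugate_eq_conjugate_iff {H : Subgroup G} {a b : G} :
    H.conjugate a = H.conjugate b ↔ a * b⁻¹ ∈ normalizer (H : Set G) := by
  rw [← conjugate_eq_self_iff, ← conjugate_conjugate]
  constructor
  · intro h
    rw [h, conjugate_conjugate, mul_inv_cancel, conjugate_eq_self_iff.mpr (one_mem _)]
  · intro h
    calc H.conjugate a = ((H.conjugate a).conjugate b⁻¹).conjugate b := by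
          rw [conjugate_conjugate, conjugate_conjugate, inv_mul_cancel, mul_one]
      _ = H.conjugate b := by rw [h]

end Subgroup

open Subgroup in
theorem IsPronormal.of_le_of_normalizer_le {G : Type*} [Group G] {P H : Subgroup G}
    (hP : IsPronormal P) (hPH : P ≤ H)
    (hN : normalizer (P : Set G) ≤ normalizer (H : Set G)) : IsPronormal H := by
  intro g
  obtain ⟨x, hx, hPx⟩ := hP g
  refine ⟨x, sup_le_sup hPH (map_mono hPH) hx, ?_⟩
  rw [conjugate_eq_conjugate_iff] at hPx ⊢
  exact hN hPx

theorem stmt15_general (G : Type*) [Group G]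
    (P H : Subgroup G) (hPpro : IsPronormal P)
    (hPH : P ≤ H) (hHN : H ≤ Subgroup.normalizer (P : Set G))
    (hnorm : (H.subgroupOf (Subgroup.normalizer (P : Set G))).Normal) :
    IsPronormal H :=
  hPpro.of_le_of_normalizer_le hPH (Subgroup.le_normalizer_of_normal_subgroupOf hHN)

theorem stmt15 (G : Type*) [Group G] [Finite G] (p : ℕ) (hp : p.Prime)
    (P H : Subgroup G) (hPp : IsPGroup p P) (hPpro : IsPronormal P)
    (hPH : P ≤ H) (hHN : H ≤ Subgroup.normalizer (P : Set G))
    (hnorm : (H.subgroupOf (Subgroup.normalizer (P : Set G))).Normal) :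
    IsPronormal H :=
  stmt15_general G P H hPpro hPH hHN hnorm
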